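/- arXiv:2011.11596 — 9 statements merged into one kernel-verified Lean document; each statement's English description precedes it below -/
import Mathlib

section
/- Let G be an acyclic attention graph on a nonempty finite set A of agents, with arbitrary additive monotonic utility functions. Then there exists an agent a* with no incoming arc, and for any such a* the allocation π given by π(a*) = R and π(a) = ∅ for all a ≠ a* is complete and weakly G-envy-free. In particular, a complete weakly G-envy-free allocation always exists when G is acyclic. -/
open Finset Function Relation

theorem exists_forall_not_rel_of_acyclic {A : Type*} [Finite A] [Nonempty A]
    {E : A → A → Prop} (hacyc : ∀ a, ¬ TransGen E a a) : ∃ a, ∀ b, ¬ E b a := by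
  have : Std.Irrefl (TransGen E) := ⟨hacyc⟩
  have : IsTrans A (TransGen E) := ⟨fun _ _ _ => TransGen.trans⟩
  obtain ⟨a, -, ha⟩ := (Finite.wellFounded_of_trans_of_irrefl (TransGen E)).has_min
    Set.univ Set.univ_nonempty
  exact ⟨a, fun b hb => ha b trivial (TransGen.single hb)⟩

section Allocation

variable {A R : Type*} [Fintype R] [DecidableEq A]

def allocateAllTo (a₀ : A) (a : A) : Finset R := if a = a₀ then univ else ∅

theorem allocateAllTo_self (a₀ : A) : allocateAllTo a₀ a₀ = (univ : Finset R) := if_pos rfl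

theorem allocateAllTo_of_ne {a₀ a : A} (h : a ≠ a₀) : allocateAllTo a₀ a = (∅ : Finset R) :=
  if_neg h

theorem pairwise_disjoint_allocateAllTo (a₀ : A) :
    Pairwise (Disjoint on allocateAllTo (R := R) a₀) := by
  intro a a' hne
  rcases eq_or_ne a a₀ with rfl | ha
  · simp [onFun, allocateAllTo_of_ne hne.symm]
  · simp [onFun, allocateAllTo_of_ne ha]

theorem exists_mem_allocateAllTo (a₀ : A) (r : R) : ∃ a, r ∈ allocateAllTo a₀ a :=
  ⟨a₀, by simp [allocateAllTo_self]⟩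

theorem sum_allocateAllTo_le_of_forall_not_rel {E : A → A → Prop} {a₀ : A}
    (hsrc : ∀ b, ¬ E b a₀) (u : A → R → ℕ) {a b : A} (hab : E a b) :
    ∑ r ∈ allocateAllTo a₀ b, u a r ≤ ∑ r ∈ allocateAllTo a₀ a, u a r := by
  rw [allocateAllTo_of_ne fun (h : b = a₀) => hsrc a (h ▸ hab), sum_empty]
  exact Nat.zero_le _

end Allocation

/-- For an acyclic attention graph on a nonempty agent set there
is an agent `a*` with no incoming arc; giving all resources to any such `a*`
(and nothing to anyone else) yields a complete, weakly G-envy-free allocation.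
In particular, a complete weakly G-envy-free allocation exists. -/
theorem stmt_2 {A R : Type*} [Fintype A] [Fintype R] [Nonempty A] [DecidableEq A]
    (E : A → A → Prop)
    (hacyc : ∀ a, ¬ Relation.TransGen E a a)
    (u : A → R → ℕ) :
    (∃ a : A, ∀ b, ¬ E b a) ∧
    (∀ aStar : A, (∀ b, ¬ E b aStar) →
      ((∀ a a' : A, a ≠ a' →
          Disjoint (if a = aStar then (Finset.univ : Finset R) else ∅)
                   (if a' = aStar then (Finset.univ : Finset R) else ∅)) ∧
       (∀ r : R, ∃ a : A, r ∈ (if a = aStar then (Finset.univ : Finset R) else ∅)) ∧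
       (∀ a b, E a b →
          ∑ r ∈ (if b = aStar then (Finset.univ : Finset R) else ∅), u a r ≤
          ∑ r ∈ (if a = aStar then (Finset.univ : Finset R) else ∅), u a r))) ∧
    (∃ π : A → Finset R, (∀ a a', a ≠ a' → Disjoint (π a) (π a')) ∧
      (∀ r : R, ∃ a, r ∈ π a) ∧
      (∀ a b, E a b → ∑ r ∈ π b, u a r ≤ ∑ r ∈ π a, u a r)) := by
  obtain ⟨a₀, hsrc⟩ := exists_forall_not_rel_of_acyclic hacyc
  refine ⟨⟨a₀, hsrc⟩, fun aStar hStar => ?_, allocateAllTo a₀, ?_⟩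
  · exact ⟨pairwise_disjoint_allocateAllTo aStar, exists_mem_allocateAllTo aStar,
      fun _ _ => sum_allocateAllTo_le_of_forall_not_rel hStar u⟩
  · exact ⟨pairwise_disjoint_allocateAllTo a₀, exists_mem_allocateAllTo a₀,
      fun _ _ => sum_allocateAllTo_le_of_forall_not_rel hsrc u⟩
end

section
/- Assume the agents have identical 0/1 utilities given by a single utility function u : R → {0,1}, and let G be a strongly connected attention graph on a nonempty finite set A of agents. Then a complete weakly G-envy-free allocation exists if and only if |A| divides the number of resources valued 1, i.e., |A| divides |{r ∈ R : u(r) = 1}|. -/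
/-!
Along an arc `a → b`, weak envy-freeness gives `u(π b) ≤ u(π a)`, so along paths as well; in a
strongly connected graph all agents therefore receive the same number `c` of valuable resources,
and there are `|A| * c` of them. Conversely, if there are `|A| * k` valuable resources, an
equivalence with `A × Fin k` hands exactly `k` of them to every agent, and the worthless ones may
go anywhere.
-/

open Finset

lemma le_of_transGen {A β : Type*} [Preorder β] {E : A → A → Prop} {f : A → β}
    (hE : ∀ a b, E a b → f b ≤ f a) {a b : A} (hab : Relation.TransGen E a b) : f b ≤ f a :=
  hab.closed' (P := fun x => f b ≤ f x) (fun hxy h => h.trans (hE _ _ hxy)) le_rfl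

lemma eq_of_transGen_of_forall_le {A β : Type*} [PartialOrder β] {E : A → A → Prop}
    {f : A → β} (hsc : ∀ a b : A, a ≠ b → Relation.TransGen E a b)
    (hE : ∀ a b, E a b → f b ≤ f a) (a b : A) : f a = f b := by
  rcases eq_or_ne a b with rfl | hab
  · rfl
  · exact le_antisymm (le_of_transGen hE (hsc b a hab.symm)) (le_of_transGen hE (hsc a b hab))

lemma sum_sum_eq_sum_of_partition {A R M : Type*} [Fintype A] [Fintype R] [AddCommMonoid M]
    {π : A → Finset R} (hdisj : ∀ a a', a ≠ a' → Disjoint (π a) (π a'))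
    (hcov : ∀ r, ∃ a, r ∈ π a) (w : R → M) :
    ∑ a, ∑ r ∈ π a, w r = ∑ r, w r := by
  classical
  rw [← sum_biUnion fun a _ a' _ h => hdisj a a' h]
  congr
  ext r
  simpa using hcov r

lemma sum_eq_card_filter_eq_one {R : Type*} {u : R → ℕ} (h01 : ∀ r, u r = 0 ∨ u r = 1)
    (s : Finset R) : ∑ r ∈ s, u r = #{r ∈ s | u r = 1} := by
  rw [card_filter]
  refine sum_congr rfl fun r _ => ?_
  rcases h01 r with h | h <;> simp [h]

lemma exists_card_filter_eq {A R : Type*} [Fintype A] [DecidableEq A] [Nonempty A]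
    {s : Finset R} {k : ℕ} (hs : #s = Fintype.card A * k) :
    ∃ σ : R → A, ∀ a, #{r ∈ s | σ r = a} = k := by
  classical
  let e : s ≃ A × Fin k := Fintype.equivOfCardEq (by simp [hs])
  refine ⟨fun r => if h : r ∈ s then (e ⟨r, h⟩).1 else Classical.arbitrary A, fun a => ?_⟩
  refine .trans ?_ (card_fin k)
  refine card_bij (fun r hr => (e ⟨r, (mem_filter.1 hr).1⟩).2) (by simp) ?_ ?_
  · intro r hr r' hr' h
    simp only [mem_filter] at hr hr'
    simp only [dif_pos hr.1, dif_pos hr'.1] at hr hr'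
    exact congrArg Subtype.val (e.injective (Prod.ext (hr.2.trans hr'.2.symm) h))
  · exact fun i _ => ⟨e.symm (a, i), by simp, by simp⟩

theorem stmt_6_general {A R : Type*} [Fintype A] [Fintype R] [Nonempty A]
    (E : A → A → Prop)
    (u : R → ℕ) (h01 : ∀ r, u r = 0 ∨ u r = 1)
    (hsc : ∀ a b : A, a ≠ b → Relation.TransGen E a b) :
    (∃ π : A → Finset R, (∀ a a', a ≠ a' → Disjoint (π a) (π a')) ∧
      (∀ r : R, ∃ a, r ∈ π a) ∧
      (∀ a b, E a b → ∑ r ∈ π b, u r ≤ ∑ r ∈ π a, u r)) ↔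
    Fintype.card A ∣ (Finset.univ.filter (fun r : R => u r = 1)).card := by
  classical
  constructor
  · rintro ⟨π, hdisj, hcov, henvy⟩
    obtain ⟨a₀⟩ := ‹Nonempty A›
    have hconst := eq_of_transGen_of_forall_le hsc henvy
    refine ⟨∑ r ∈ π a₀, u r, ?_⟩
    calc #{r | u r = 1} = ∑ r, u r := (sum_eq_card_filter_eq_one h01 univ).symm
      _ = ∑ a, ∑ r ∈ π a, u r := (sum_sum_eq_sum_of_partition hdisj hcov u).symm
      _ = Fintype.card A * ∑ r ∈ π a₀, u r := by simp [hconst _ a₀]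
  · rintro ⟨k, hk⟩
    obtain ⟨σ, hσ⟩ := exists_card_filter_eq hk
    have hvalue (a : A) : ∑ r ∈ {r | σ r = a}, u r = k := by
      rw [sum_eq_card_filter_eq_one h01, filter_comm, hσ]
    refine ⟨fun a => {r | σ r = a}, fun a a' h => disjoint_filter.2 fun r _ h₁ h₂ => h (h₁ ▸ h₂),
      fun r => ⟨σ r, by simp⟩, fun a b _ => by rw [hvalue, hvalue]⟩

/-- Identical 0/1 utilities, strongly connected attention graph
on a nonempty agent set: a complete weakly G-envy-free allocation exists iff
the number of agents divides the number of resources valued 1. -/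
theorem stmt_6 {A R : Type*} [Fintype A] [Fintype R] [Nonempty A]
    (E : A → A → Prop) (hirr : ∀ a, ¬ E a a)
    (u : R → ℕ) (h01 : ∀ r, u r = 0 ∨ u r = 1)
    (hsc : ∀ a b : A, a ≠ b → Relation.TransGen E a b) :
    (∃ π : A → Finset R, (∀ a a', a ≠ a' → Disjoint (π a) (π a')) ∧
      (∀ r : R, ∃ a, r ∈ π a) ∧
      (∀ a b, E a b → ∑ r ∈ π b, u r ≤ ∑ r ∈ π a, u r)) ↔
    Fintype.card A ∣ (Finset.univ.filter (fun r : R => u r = 1)).card :=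
  stmt_6_general E u h01 hsc
end

section
/- Assume the agents have identical utilities given by a single additive monotonic utility function u with u(r) > 0 for every resource r ∈ R, and let G be a strongly connected attention graph on A. If R is nonempty and |A| > |R|, then no complete weakly G-envy-free allocation exists. -/
/-! By pigeonhole some agent `a` receives nothing. Weak envy-freeness makes the common utility of
bundles non-increasing along arcs, hence along paths, and every agent is reachable from `a`;
so every bundle is worth at most `u(∅) = 0`, which fails for any agent holding a resource. -/

open Finset

theorem Finset.exists_eq_empty_of_disjoint_of_card_lt {ι α : Type*} [Fintype ι] [Fintype α]
    (s : ι → Finset α) (hdisj : ∀ i j, i ≠ j → Disjoint (s i) (s j))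
    (hcard : Fintype.card α < Fintype.card ι) : ∃ i, s i = ∅ := by
  by_contra! hne
  choose f hf using hne
  have hinj : Function.Injective f := fun i j hij => by
    by_contra hij'
    exact disjoint_left.mp (hdisj i j hij') (hf i) (hij ▸ hf j)
  exact (Fintype.card_le_of_injective f hinj).not_gt hcard

theorem Relation.TransGen.le_of_forall_le {α β : Type*} [Preorder β] {r : α → α → Prop} {f : α → β}
    (h : ∀ a b, r a b → f b ≤ f a) {a b : α} (hab : TransGen r a b) : f b ≤ f a := by
  induction hab with
  | single hab => exact h _ _ hab
  | tail _ hbc ih => exact (h _ _ hbc).trans ih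

theorem stmt_7_general {A R : Type*} [Fintype A] [Fintype R] [Nonempty R]
    (E : A → A → Prop)
    (u : R → ℕ) (hu : ∀ r, 0 < u r)
    (hsc : ∀ a b : A, a ≠ b → Relation.TransGen E a b)
    (hcard : Fintype.card R < Fintype.card A) :
    ¬ ∃ π : A → Finset R, (∀ a a', a ≠ a' → Disjoint (π a) (π a')) ∧
      (∀ r : R, ∃ a, r ∈ π a) ∧
      (∀ a b, E a b → ∑ r ∈ π b, u r ≤ ∑ r ∈ π a, u r) := by
  rintro ⟨π, hdisj, hcomp, hef⟩
  obtain ⟨a, ha⟩ := exists_eq_empty_of_disjoint_of_card_lt π hdisj hcard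
  obtain ⟨r⟩ := ‹Nonempty R›
  obtain ⟨b, hb⟩ := hcomp r
  have hab : a ≠ b := by
    rintro rfl
    simp [ha] at hb
  have hle : ∑ s ∈ π b, u s ≤ ∑ s ∈ π a, u s := (hsc a b hab).le_of_forall_le hef
  have hpos : 0 < ∑ s ∈ π b, u s := sum_pos' (fun s _ => Nat.zero_le _) ⟨r, hb, hu r⟩
  rw [ha, sum_empty] at hle
  omega

/-- Identical positive utilities, strongly connected attention
graph, nonempty resource set, more agents than resources: no complete
weakly G-envy-free allocation exists. -/
theorem stmt_7 {A R : Type*} [Fintype A] [Fintype R] [Nonempty R]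
    (E : A → A → Prop) (hirr : ∀ a, ¬ E a a)
    (u : R → ℕ) (hu : ∀ r, 0 < u r)
    (hsc : ∀ a b : A, a ≠ b → Relation.TransGen E a b)
    (hcard : Fintype.card R < Fintype.card A) :
    ¬ ∃ π : A → Finset R, (∀ a a', a ≠ a' → Disjoint (π a) (π a')) ∧
      (∀ r : R, ∃ a, r ∈ π a) ∧
      (∀ a b, E a b → ∑ r ∈ π b, u r ≤ ∑ r ∈ π a, u r) :=
  stmt_7_general E u hu hsc hcard
end

section
/- Assume the agents have identical utilities given by a single additive monotonic utility function u with u(r) > 0 for every resource r ∈ R, and let π be a weakly G-envy-free allocation. Let C ⊆ A be a set of agents that are pairwise mutually reachable in G (i.e., C is contained in one strongly connected component) with |C| > |R|. Then π(a) = ∅ for every a ∈ C, and moreover π(b) = ∅ for every agent b reachable from some agent of C. -/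
/-! Envy along an arc means the utility of bundles is antitone along every path, so an agent
reachable from an agent with an empty bundle has utility zero and, utilities being positive,
an empty bundle too. Since `C` has more agents than there are resources, disjointness gives an
agent of `C` with an empty bundle, and every other agent of `C`, as well as everything reachable
from `C`, is reachable from it. -/

open Finset

theorem Relation.TransGen.antitone_of_forall {α β : Type*} [Preorder β] {r : α → α → Prop}
    {f : α → β} (hf : ∀ a b, r a b → f b ≤ f a) {a b : α} (h : Relation.TransGen r a b) :
    f b ≤ f a := by
  induction h with
  | single hab => exact hf _ _ hab
  | tail _ hbc ih => exact (hf _ _ hbc).trans ih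

theorem Finset.exists_eq_empty_of_card_lt {ι α : Type*} [Fintype α] {s : Finset ι}
    {f : ι → Finset α} (hf : (s : Set ι).PairwiseDisjoint f) (hcard : Fintype.card α < #s) :
    ∃ i ∈ s, f i = ∅ := by
  classical
  by_contra! hne
  exact hcard.not_ge ((card_le_card_biUnion hf hne).trans (card_le_univ _))

theorem eq_empty_of_transGen_of_eq_empty {A R : Type*} {E : A → A → Prop} {u : R → ℕ}
    (hu : ∀ r, 0 < u r) {π : A → Finset R}
    (hef : ∀ a b, E a b → ∑ r ∈ π b, u r ≤ ∑ r ∈ π a, u r) {a b : A}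
    (hab : Relation.TransGen E a b) (ha : π a = ∅) : π b = ∅ := by
  have hle : ∑ r ∈ π b, u r ≤ ∑ r ∈ π a, u r :=
    hab.antitone_of_forall (f := fun x => ∑ r ∈ π x, u r) hef
  rw [ha, sum_empty, nonpos_iff_eq_zero, sum_eq_zero_iff] at hle
  exact eq_empty_of_forall_notMem fun r hr => (hu r).ne' (hle r hr)

theorem stmt_8_general {A R : Type*} [Fintype R]
    (E : A → A → Prop)
    (u : R → ℕ) (hu : ∀ r, 0 < u r)
    (π : A → Finset R) (hdisj : ∀ a a', a ≠ a' → Disjoint (π a) (π a'))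
    (hef : ∀ a b, E a b → ∑ r ∈ π b, u r ≤ ∑ r ∈ π a, u r)
    (C : Finset A)
    (hC : ∀ a ∈ C, ∀ a' ∈ C, a ≠ a' → Relation.TransGen E a a')
    (hcard : Fintype.card R < C.card) :
    (∀ a ∈ C, π a = ∅) ∧
    (∀ b : A, (∃ a ∈ C, Relation.TransGen E a b) → π b = ∅) := by
  obtain ⟨a₀, ha₀, hempty⟩ :=
    exists_eq_empty_of_card_lt (fun a _ a' _ h => hdisj a a' h) hcard
  have hCempty : ∀ a ∈ C, π a = ∅ := fun a ha => by
    by_cases h : a = a₀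
    · exact h ▸ hempty
    · exact eq_empty_of_transGen_of_eq_empty hu hef (hC a₀ ha₀ a ha (Ne.symm h)) hempty
  exact ⟨hCempty, fun b ⟨a, ha, hab⟩ => eq_empty_of_transGen_of_eq_empty hu hef hab (hCempty a ha)⟩

/-- Identical positive utilities; in a weakly G-envy-free
allocation, a set `C` of pairwise mutually reachable agents with `|C| > |R|`
receives nothing, and so does every agent reachable from some agent of `C`. -/
theorem stmt_8 {A R : Type*} [Fintype A] [Fintype R]
    (E : A → A → Prop) (hirr : ∀ a, ¬ E a a)
    (u : R → ℕ) (hu : ∀ r, 0 < u r)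
    (π : A → Finset R) (hdisj : ∀ a a', a ≠ a' → Disjoint (π a) (π a'))
    (hef : ∀ a b, E a b → ∑ r ∈ π b, u r ≤ ∑ r ∈ π a, u r)
    (C : Finset A)
    (hC : ∀ a ∈ C, ∀ a' ∈ C, a ≠ a' → Relation.TransGen E a a')
    (hcard : Fintype.card R < C.card) :
    (∀ a ∈ C, π a = ∅) ∧
    (∀ b : A, (∃ a ∈ C, Relation.TransGen E a b) → π b = ∅) :=
  stmt_8_general E u hu π hdisj hef C hC hcard
end

section
/- Assume the agents have identical utilities given by a single additive monotonic utility function u with u(r) > 0 for every resource r ∈ R, and let π be a weakly G-envy-free allocation. Then the following three statements are equivalent: (1) π is complete; (2) π is Pareto-efficient; (3) the utilitarian social welfare of π is maximal, namely W(π) = Σ_{r∈R} u(r). -/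
/-!
For a disjoint allocation the welfare is the total utility of the allocated resources, so it is at
most `∑ r, u r`, with equality when every resource is allocated. Maximal welfare rules out a Pareto
improvement, since an improvement raises the welfare strictly; conversely, as utilities are
positive, handing an unallocated resource to any agent is a Pareto improvement.
-/

open Finset Function

namespace Allocation

variable {A R M : Type*}

def ParetoDominates [AddCommMonoid M] [PartialOrder M] (u : R → M) (π' π : A → Finset R) : Prop :=
  (∀ a, ∑ r ∈ π a, u r ≤ ∑ r ∈ π' a, u r) ∧ ∃ a, ∑ r ∈ π a, u r < ∑ r ∈ π' a, u r

theorem sum_sum_eq_sum_biUnion [Fintype A] [DecidableEq R] [AddCommMonoid M] (u : R → M)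
    {π : A → Finset R} (hπ : Pairwise (Disjoint on π)) :
    ∑ a, ∑ r ∈ π a, u r = ∑ r ∈ univ.biUnion π, u r :=
  (sum_biUnion (hπ.set_pairwise _)).symm

theorem pairwise_disjoint_update_insert [DecidableEq A] [DecidableEq R] {π : A → Finset R}
    (hπ : Pairwise (Disjoint on π)) (a₀ : A) {r₀ : R} (hr₀ : ∀ a, r₀ ∉ π a) :
    Pairwise (Disjoint on update π a₀ (insert r₀ (π a₀))) := by
  intro x y hxy
  rcases eq_or_ne x a₀ with rfl | hx
  · simpa [onFun, hxy.symm, hr₀ y] using hπ hxy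
  rcases eq_or_ne y a₀ with rfl | hy
  · simpa [onFun, hx, hr₀ x] using hπ hxy
  · simpa [onFun, hx, hy] using hπ hxy

theorem sum_sum_le_sum_univ [Fintype A] [Fintype R] [AddCommMonoid M] [PartialOrder M]
    [CanonicallyOrderedAdd M] (u : R → M) {π : A → Finset R} (hπ : Pairwise (Disjoint on π)) :
    ∑ a, ∑ r ∈ π a, u r ≤ ∑ r, u r := by
  classical
  rw [sum_sum_eq_sum_biUnion u hπ]
  exact sum_le_sum_of_subset (subset_univ _)

theorem sum_sum_eq_sum_univ_of_forall_exists_mem [Fintype A] [Fintype R] [AddCommMonoid M]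
    (u : R → M) {π : A → Finset R} (hπ : Pairwise (Disjoint on π)) (hcomplete : ∀ r, ∃ a, r ∈ π a) :
    ∑ a, ∑ r ∈ π a, u r = ∑ r, u r := by
  classical
  have hcover : univ.biUnion π = univ :=
    eq_univ_of_forall fun r ↦ mem_biUnion.2 <| (hcomplete r).imp fun a ha ↦ ⟨mem_univ a, ha⟩
  rw [sum_sum_eq_sum_biUnion u hπ, hcover]

theorem not_paretoDominates_of_sum_sum_eq_sum_univ [Fintype A] [Fintype R] [AddCommMonoid M]
    [PartialOrder M] [IsOrderedCancelAddMonoid M] [CanonicallyOrderedAdd M] (u : R → M)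
    {π : A → Finset R} (hmax : ∑ a, ∑ r ∈ π a, u r = ∑ r, u r) :
    ¬ ∃ π' : A → Finset R, Pairwise (Disjoint on π') ∧ ParetoDominates u π' π := by
  rintro ⟨π', hπ', hle, a₀, hlt⟩
  have hgain : ∑ a, ∑ r ∈ π a, u r < ∑ a, ∑ r ∈ π' a, u r :=
    sum_lt_sum (fun a _ ↦ hle a) ⟨a₀, mem_univ a₀, hlt⟩
  exact (hgain.trans_le (sum_sum_le_sum_univ u hπ')).ne hmax

theorem exists_paretoDominates_of_forall_not_mem [DecidableEq A] [DecidableEq R] [AddCommMonoid M]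
    [PartialOrder M] [IsOrderedCancelAddMonoid M] [CanonicallyOrderedAdd M] (u : R → M)
    {π : A → Finset R} (hπ : Pairwise (Disjoint on π)) (a₀ : A) {r₀ : R}
    (hr₀ : ∀ a, r₀ ∉ π a) (hu : 0 < u r₀) :
    ∃ π' : A → Finset R, Pairwise (Disjoint on π') ∧ ParetoDominates u π' π := by
  refine ⟨update π a₀ (insert r₀ (π a₀)),
    pairwise_disjoint_update_insert hπ a₀ hr₀, fun a ↦ ?_, a₀, ?_⟩
  · rcases eq_or_ne a a₀ with rfl | ha
    · simpa using sum_le_sum_of_subset (subset_insert r₀ (π a))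
    · simp [ha]
  · simpa [sum_insert (hr₀ a₀)] using lt_add_of_pos_left (∑ r ∈ π a₀, u r) hu

theorem forall_exists_mem_of_not_paretoDominates [Nonempty A] [AddCommMonoid M] [PartialOrder M]
    [IsOrderedCancelAddMonoid M] [CanonicallyOrderedAdd M] (u : R → M) (hu : ∀ r, 0 < u r)
    {π : A → Finset R} (hπ : Pairwise (Disjoint on π))
    (hpareto : ¬ ∃ π' : A → Finset R, Pairwise (Disjoint on π') ∧ ParetoDominates u π' π) :
    ∀ r, ∃ a, r ∈ π a := by
  classical
  by_contra! ⟨r₀, hr₀⟩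
  exact hpareto <| exists_paretoDominates_of_forall_not_mem u hπ (Classical.arbitrary A) hr₀ (hu r₀)

end Allocation

open Allocation Function in
theorem stmt_13_general {A R : Type*} [Fintype A] [Fintype R] [Nonempty A]
    (u : R → ℕ) (hu : ∀ r, 0 < u r)
    (π : A → Finset R) (hdisj : ∀ x y, x ≠ y → Disjoint (π x) (π y)) :
    ((∀ r : R, ∃ a, r ∈ π a) ↔
      ¬ ∃ π' : A → Finset R, (∀ x y, x ≠ y → Disjoint (π' x) (π' y)) ∧
        (∀ a, ∑ r ∈ π a, u r ≤ ∑ r ∈ π' a, u r) ∧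
        (∃ a, ∑ r ∈ π a, u r < ∑ r ∈ π' a, u r)) ∧
    ((¬ ∃ π' : A → Finset R, (∀ x y, x ≠ y → Disjoint (π' x) (π' y)) ∧
        (∀ a, ∑ r ∈ π a, u r ≤ ∑ r ∈ π' a, u r) ∧
        (∃ a, ∑ r ∈ π a, u r < ∑ r ∈ π' a, u r)) ↔
      (∑ a : A, ∑ r ∈ π a, u r = ∑ r : R, u r)) := by
  have hπ : Pairwise (Disjoint on π) := fun x y ↦ hdisj x y
  have complete_to_max := sum_sum_eq_sum_univ_of_forall_exists_mem u hπ
  have max_to_pareto := not_paretoDominates_of_sum_sum_eq_sum_univ (A := A) u (π := π)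
  have pareto_to_complete := forall_exists_mem_of_not_paretoDominates u hu hπ
  exact ⟨⟨fun hc ↦ max_to_pareto (complete_to_max hc), pareto_to_complete⟩,
    ⟨fun hp ↦ complete_to_max (pareto_to_complete hp), max_to_pareto⟩⟩

/-- Identical positive utilities; for a weakly G-envy-free
allocation, completeness, Pareto-efficiency, and maximality of the utilitarian
social welfare (`W(π) = Σ_{r∈R} u r`) are equivalent. -/
theorem stmt_13 {A R : Type*} [Fintype A] [Fintype R] [Nonempty A]
    (E : A → A → Prop) (hirr : ∀ a, ¬ E a a)
    (u : R → ℕ) (hu : ∀ r, 0 < u r)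
    (π : A → Finset R) (hdisj : ∀ x y, x ≠ y → Disjoint (π x) (π y))
    (hef : ∀ a b, E a b → ∑ r ∈ π b, u r ≤ ∑ r ∈ π a, u r) :
    ((∀ r : R, ∃ a, r ∈ π a) ↔
      ¬ ∃ π' : A → Finset R, (∀ x y, x ≠ y → Disjoint (π' x) (π' y)) ∧
        (∀ a, ∑ r ∈ π a, u r ≤ ∑ r ∈ π' a, u r) ∧
        (∃ a, ∑ r ∈ π a, u r < ∑ r ∈ π' a, u r)) ∧
    ((¬ ∃ π' : A → Finset R, (∀ x y, x ≠ y → Disjoint (π' x) (π' y)) ∧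
        (∀ a, ∑ r ∈ π a, u r ≤ ∑ r ∈ π' a, u r) ∧
        (∃ a, ∑ r ∈ π a, u r < ∑ r ∈ π' a, u r)) ↔
      (∑ a : A, ∑ r ∈ π a, u r = ∑ r : R, u r)) :=
  stmt_13_general u hu π hdisj
end

section
/- Assume all agents have 0/1 utility functions (u_a(r) ∈ {0,1} for all a, r) and that every resource is valued 1 by at least one agent, and let π be a weakly G-envy-free allocation. Then: (i) π is Pareto-efficient if and only if its utilitarian social welfare is maximal, namely W(π) = Σ_{r∈R} max_{a∈A} u_a(r); and (ii) if π is Pareto-efficient, then π is complete. -/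
/-!
With 0/1 utilities and every resource wanted by someone, no allocation has welfare above `|R|`,
and this bound is `Σ_r max_a u_a(r)`. If some resource `r` were not held by an agent valuing it,
handing `r` to an agent `b` with `u_b(r) = 1` would cost its holder nothing and gain `b` one unit:
a Pareto improvement. So a Pareto-efficient allocation gives every resource to an agent valuing it,
which makes it complete and its welfare `|R|`. Conversely a Pareto improvement strictly increases
welfare, which is impossible once the welfare is `|R|`.
-/

open Finset Function

namespace FairDivision

variable {A R : Type*}

def Dominates (u : A → R → ℕ) (π' π : A → Finset R) : Prop :=
  (∀ a, ∑ r ∈ π a, u a r ≤ ∑ r ∈ π' a, u a r) ∧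
    ∃ a, ∑ r ∈ π a, u a r < ∑ r ∈ π' a, u a r

theorem Dominates.welfare_lt [Fintype A] {u : A → R → ℕ} {π π' : A → Finset R}
    (h : Dominates u π' π) : ∑ a, ∑ r ∈ π a, u a r < ∑ a, ∑ r ∈ π' a, u a r :=
  let ⟨hle, a, hlt⟩ := h
  sum_lt_sum (fun a _ => hle a) ⟨a, mem_univ a, hlt⟩

theorem welfare_le_card [Fintype A] [Fintype R] [DecidableEq R] {u : A → R → ℕ}
    (hu : ∀ a r, u a r ≤ 1) {π : A → Finset R} (hπ : Pairwise (Disjoint on π)) :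
    ∑ a, ∑ r ∈ π a, u a r ≤ Fintype.card R :=
  calc ∑ a, ∑ r ∈ π a, u a r
      ≤ ∑ a, #(π a) := sum_le_sum fun a _ => by
        simpa using sum_le_card_nsmul (π a) (u a) 1 fun r _ => hu a r
    _ = #(univ.biUnion π) := (card_biUnion fun x _ y _ hxy => hπ hxy).symm
    _ ≤ Fintype.card R := card_le_univ _

theorem card_le_welfare [Fintype A] [Fintype R] {u : A → R → ℕ} {π : A → Finset R}
    (hcover : ∀ r, ∃ a, r ∈ π a ∧ 0 < u a r) :
    Fintype.card R ≤ ∑ a, ∑ r ∈ π a, u a r := by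
  classical
  calc Fintype.card R = ∑ _r : R, 1 := by simp
    _ ≤ ∑ r, ∑ a, if r ∈ π a then u a r else 0 := sum_le_sum fun r _ => by
        obtain ⟨a, hr, hpos⟩ := hcover r
        have hone : 1 ≤ if r ∈ π a then u a r else 0 := by
          simpa [hr, Nat.one_le_iff_ne_zero] using hpos.ne'
        exact hone.trans (single_le_sum (f := fun a => if r ∈ π a then u a r else 0)
          (fun _ _ => Nat.zero_le _) (mem_univ a))
    _ = ∑ a, ∑ r ∈ π a, u a r := by
        rw [sum_comm]
        simp_rw [sum_ite_mem, univ_inter]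

theorem sup_eq_one_of_zero_one [Fintype A] {u : A → R → ℕ}
    (h01 : ∀ a r, u a r = 0 ∨ u a r = 1) {r : R} (hr : ∃ a, u a r = 1) :
    univ.sup (fun a => u a r) = 1 :=
  let ⟨b, hb⟩ := hr
  le_antisymm (Finset.sup_le fun a _ => by rcases h01 a r with h | h <;> omega)
    (hb ▸ le_sup (f := fun a => u a r) (mem_univ b))

section Transfer

variable [DecidableEq A] [DecidableEq R]

def transfer (π : A → Finset R) (b : A) (r : R) : A → Finset R :=
  fun a => if a = b then insert r (π a) else (π a).erase r

theorem pairwise_disjoint_transfer {π : A → Finset R} (hπ : Pairwise (Disjoint on π))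
    (b : A) (r : R) : Pairwise (Disjoint on transfer π b r) := by
  intro x y hxy
  simp only [Function.onFun, transfer, Finset.disjoint_left]
  intro s hx hy
  have hπs : s ∈ π x → s ∉ π y := fun h => Finset.disjoint_left.mp (hπ hxy) h
  split_ifs at hx hy <;> simp_all

theorem dominates_transfer {u : A → R → ℕ} {π : A → Finset R} {b : A} {r : R}
    (hb : r ∉ π b) (hpos : 0 < u b r) (hzero : ∀ a, r ∈ π a → u a r = 0) :
    Dominates u (transfer π b r) π := by
  have hgain : ∑ s ∈ π b, u b s < ∑ s ∈ transfer π b r b, u b s := by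
    rw [transfer, if_pos rfl, sum_insert hb]
    omega
  refine ⟨fun a => ?_, b, hgain⟩
  by_cases hab : a = b
  · subst hab
    exact hgain.le
  · rw [transfer, if_neg hab]
    by_cases hr : r ∈ π a
    · rw [sum_erase _ (hzero a hr)]
    · rw [erase_eq_of_notMem hr]

end Transfer

theorem exists_mem_pos_of_not_dominated {u : A → R → ℕ} {π : A → Finset R}
    (hπ : Pairwise (Disjoint on π))
    (heff : ¬ ∃ π' : A → Finset R, Pairwise (Disjoint on π') ∧ Dominates u π' π)
    {r : R} (hr : ∃ b, 0 < u b r) : ∃ a, r ∈ π a ∧ 0 < u a r := by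
  classical
  by_contra! hnone
  obtain ⟨b, hpos⟩ := hr
  have hzero : ∀ a, r ∈ π a → u a r = 0 := fun a ha => Nat.le_zero.mp (hnone a ha)
  have hb : r ∉ π b := fun h => hpos.ne' (hzero b h)
  exact heff ⟨_, pairwise_disjoint_transfer hπ b r, dominates_transfer hb hpos hzero⟩

end FairDivision

theorem stmt_14_general {A R : Type*} [Fintype A] [Fintype R]
    (u : A → R → ℕ) (h01 : ∀ a r, u a r = 0 ∨ u a r = 1)
    (hval : ∀ r : R, ∃ a : A, u a r = 1)
    (π : A → Finset R) (hdisj : ∀ x y, x ≠ y → Disjoint (π x) (π y)) :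
    ((¬ ∃ π' : A → Finset R, (∀ x y, x ≠ y → Disjoint (π' x) (π' y)) ∧
        (∀ a, ∑ r ∈ π a, u a r ≤ ∑ r ∈ π' a, u a r) ∧
        (∃ a, ∑ r ∈ π a, u a r < ∑ r ∈ π' a, u a r)) ↔
      (∑ a : A, ∑ r ∈ π a, u a r = ∑ r : R, Finset.univ.sup (fun a => u a r))) ∧
    ((¬ ∃ π' : A → Finset R, (∀ x y, x ≠ y → Disjoint (π' x) (π' y)) ∧
        (∀ a, ∑ r ∈ π a, u a r ≤ ∑ r ∈ π' a, u a r) ∧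
        (∃ a, ∑ r ∈ π a, u a r < ∑ r ∈ π' a, u a r)) →
      (∀ r : R, ∃ a, r ∈ π a)) := by
  classical
  have hle1 : ∀ a r, u a r ≤ 1 := fun a r => by rcases h01 a r with h | h <;> omega
  have hmax : ∑ r : R, univ.sup (fun a => u a r) = Fintype.card R := by
    simp [FairDivision.sup_eq_one_of_zero_one h01 (hval _)]
  have hcover := fun heff r =>
    FairDivision.exists_mem_pos_of_not_dominated hdisj heff ((hval r).imp fun _ h => h ▸ one_pos)
  refine ⟨⟨fun heff => ?_, ?_⟩, fun heff r => (hcover heff r).imp fun _ h => h.1⟩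
  · rw [hmax]
    exact (FairDivision.welfare_le_card hle1 hdisj).antisymm
      (FairDivision.card_le_welfare (hcover heff))
  · rintro hW ⟨π', hπ', hdom⟩
    have := FairDivision.welfare_le_card hle1 hπ'
    have := FairDivision.Dominates.welfare_lt hdom
    omega

/-- 0/1 utilities, every resource valued 1 by some agent; for a
weakly G-envy-free allocation: (i) Pareto-efficiency is equivalent to maximal
utilitarian social welfare `W(π) = Σ_{r∈R} max_a u a r`; (ii) Pareto-efficiency
implies completeness. -/
theorem stmt_14 {A R : Type*} [Fintype A] [Fintype R]
    (E : A → A → Prop) (hirr : ∀ a, ¬ E a a)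
    (u : A → R → ℕ) (h01 : ∀ a r, u a r = 0 ∨ u a r = 1)
    (hval : ∀ r : R, ∃ a : A, u a r = 1)
    (π : A → Finset R) (hdisj : ∀ x y, x ≠ y → Disjoint (π x) (π y))
    (hef : ∀ a b, E a b → ∑ r ∈ π b, u a r ≤ ∑ r ∈ π a, u a r) :
    ((¬ ∃ π' : A → Finset R, (∀ x y, x ≠ y → Disjoint (π' x) (π' y)) ∧
        (∀ a, ∑ r ∈ π a, u a r ≤ ∑ r ∈ π' a, u a r) ∧
        (∃ a, ∑ r ∈ π a, u a r < ∑ r ∈ π' a, u a r)) ↔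
      (∑ a : A, ∑ r ∈ π a, u a r = ∑ r : R, Finset.univ.sup (fun a => u a r))) ∧
    ((¬ ∃ π' : A → Finset R, (∀ x y, x ≠ y → Disjoint (π' x) (π' y)) ∧
        (∀ a, ∑ r ∈ π a, u a r ≤ ∑ r ∈ π' a, u a r) ∧
        (∃ a, ∑ r ∈ π a, u a r < ∑ r ∈ π' a, u a r)) →
      (∀ r : R, ∃ a, r ∈ π a)) :=
  stmt_14_general u h01 hval π hdisj
end

section
/- Let G be an acyclic attention graph on a finite set A of agents with arbitrary additive monotonic utility functions. Then there exists an allocation that is both weakly G-envy-free and Pareto-efficient. -/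
/-!
Rank the agents by how many agents they reach in `G`: this strictly decreases along arcs, so the
weights `w a = N ^ rank a`, with `N` larger than every agent's utility for every bundle, satisfy
`N * w b ≤ w a` on each arc `(a, b)`. Take an allocation maximising the weighted welfare
`∑ a, w a * u_a(π a)`. It is Pareto-efficient, since a dominating allocation would have larger
welfare. If `a` valued the bundle of an out-neighbour `b` positively, handing `π b` over to `a`
would gain at least `w a` and lose less than `w b * N ≤ w a`; so `a` values `π b` at zero and in
particular does not envy `b`.
-/

open Finset Function Relation

namespace Allocation

variable {A R : Type*}

theorem ncard_transGen_lt_of_rel [Finite A] {E : A → A → Prop}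
    (hacyc : ∀ a, ¬ TransGen E a a) {a b : A} (hab : E a b) :
    {x | TransGen E b x}.ncard < {x | TransGen E a x}.ncard :=
  Set.ncard_lt_ncard ⟨fun _ hx => TransGen.head hab hx,
    fun hsub => hacyc b (hsub (TransGen.single hab))⟩

theorem exists_pos_weights_of_acyclic [Finite A] {E : A → A → Prop}
    (hacyc : ∀ a, ¬ TransGen E a a) {N : ℕ} (hN : 0 < N) :
    ∃ w : A → ℕ, (∀ a, 0 < w a) ∧ ∀ a b, E a b → N * w b ≤ w a := by
  refine ⟨fun a => N ^ {x | TransGen E a x}.ncard, fun a => pow_pos hN _, fun a b hab => ?_⟩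
  rw [← pow_succ']
  exact Nat.pow_le_pow_right hN (ncard_transGen_lt_of_rel hacyc hab)

def weightedWelfare [Fintype A] (w : A → ℕ) (u : A → R → ℕ) (π : A → Finset R) : ℕ :=
  ∑ a, w a * ∑ r ∈ π a, u a r

theorem exists_isMax_weightedWelfare [Fintype A] [Fintype R]
    (w : A → ℕ) (u : A → R → ℕ) :
    ∃ π : A → Finset R, Pairwise (Disjoint on π) ∧
      ∀ π' : A → Finset R, Pairwise (Disjoint on π') →
        weightedWelfare w u π' ≤ weightedWelfare w u π := by
  classical
  obtain ⟨π, hπ, hmax⟩ := exists_max_image {π : A → Finset R | Pairwise (Disjoint on π)}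
    (weightedWelfare w u)
    ⟨fun _ => ∅, mem_filter.2 ⟨mem_univ _, fun _ _ _ => disjoint_empty_left _⟩⟩
  simp only [mem_filter, mem_univ, true_and] at hπ hmax
  exact ⟨π, hπ, hmax⟩

theorem weightedWelfare_lt_of_dominates [Fintype A] {w : A → ℕ} (hw : ∀ a, 0 < w a)
    {u : A → R → ℕ} {π π' : A → Finset R} (hle : ∀ a, ∑ r ∈ π a, u a r ≤ ∑ r ∈ π' a, u a r)
    (hlt : ∃ a, ∑ r ∈ π a, u a r < ∑ r ∈ π' a, u a r) :
    weightedWelfare w u π < weightedWelfare w u π' := by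
  obtain ⟨a, ha⟩ := hlt
  exact sum_lt_sum (fun b _ => Nat.mul_le_mul_left _ (hle b))
    ⟨a, mem_univ a, Nat.mul_lt_mul_of_pos_left ha (hw a)⟩

section Transfer

variable [DecidableEq A] [DecidableEq R]

def transfer (π : A → Finset R) (a b : A) : A → Finset R :=
  update (update π a (π a ∪ π b)) b ∅

theorem pairwise_disjoint_transfer {π : A → Finset R} (hπ : Pairwise (Disjoint on π))
    (a b : A) : Pairwise (Disjoint on transfer π a b) := by
  intro x y hxy
  simp only [onFun, transfer, update_apply]
  split_ifs <;> (try simp only [disjoint_union_left, disjoint_union_right, disjoint_empty_left,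
    disjoint_empty_right]) <;> grind [Pairwise]

theorem weightedWelfare_transfer [Fintype A] (w : A → ℕ) (u : A → R → ℕ) {π : A → Finset R}
    (hπ : Pairwise (Disjoint on π)) {a b : A} (hab : a ≠ b) :
    weightedWelfare w u (transfer π a b) + w b * ∑ r ∈ π b, u b r =
      weightedWelfare w u π + w a * ∑ r ∈ π b, u a r := by
  have single (c : A) (n : ℕ) : n = ∑ x, if x = c then n else 0 := by simp
  rw [weightedWelfare, weightedWelfare, single b (w b * _), single a (w a * _),
    ← sum_add_distrib, ← sum_add_distrib]
  refine sum_congr rfl fun x _ => ?_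
  by_cases hxb : x = b
  · subst hxb
    simp [transfer, hab.symm]
  by_cases hxa : x = a
  · subst hxa
    simp [transfer, hxb, sum_union (hπ hab), mul_add]
  simp [transfer, hxa, hxb]

theorem sum_eq_zero_of_isMax_weightedWelfare [Fintype A] {w : A → ℕ} {u : A → R → ℕ}
    {π : A → Finset R} (hπ : Pairwise (Disjoint on π))
    (hmax : ∀ π' : A → Finset R, Pairwise (Disjoint on π') →
      weightedWelfare w u π' ≤ weightedWelfare w u π)
    {a b : A} (hab : a ≠ b) (hw : w b * ∑ r ∈ π b, u b r < w a) :
    ∑ r ∈ π b, u a r = 0 := by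
  by_contra hne
  have hgain : w a ≤ w a * ∑ r ∈ π b, u a r := Nat.le_mul_of_pos_right _ (Nat.pos_of_ne_zero hne)
  have hbalance := weightedWelfare_transfer w u hπ hab
  have hle := hmax _ (pairwise_disjoint_transfer hπ a b)
  omega

end Transfer

end Allocation

open Allocation

/-- For an acyclic attention graph (arbitrary additive monotonic
utilities) there exists an allocation that is both weakly G-envy-free and
Pareto-efficient. -/
theorem stmt_15 {A R : Type*} [Fintype A] [Fintype R]
    (E : A → A → Prop)
    (hacyc : ∀ a, ¬ Relation.TransGen E a a)
    (u : A → R → ℕ) :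
    ∃ π : A → Finset R, (∀ x y, x ≠ y → Disjoint (π x) (π y)) ∧
      (∀ a b, E a b → ∑ r ∈ π b, u a r ≤ ∑ r ∈ π a, u a r) ∧
      ¬ ∃ π' : A → Finset R, (∀ x y, x ≠ y → Disjoint (π' x) (π' y)) ∧
        (∀ a, ∑ r ∈ π a, u a r ≤ ∑ r ∈ π' a, u a r) ∧
        (∃ a, ∑ r ∈ π a, u a r < ∑ r ∈ π' a, u a r) := by
  classical
  set N := ∑ a, ∑ r, u a r + 1
  have hN (b : A) (S : Finset R) : ∑ r ∈ S, u b r < N :=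
    Nat.lt_succ_of_le ((sum_le_sum_of_subset S.subset_univ).trans
      (single_le_sum (f := fun a => ∑ r, u a r) (fun _ _ => Nat.zero_le _) (mem_univ b)))
  obtain ⟨w, hw_pos, hw_arc⟩ := exists_pos_weights_of_acyclic hacyc (by omega : 0 < N)
  obtain ⟨π, hπ, hmax⟩ := exists_isMax_weightedWelfare w u
  refine ⟨π, fun _ _ h => hπ h, fun a b hab => ?_, ?_⟩
  · have hne : a ≠ b := by rintro rfl; exact hacyc a (TransGen.single hab)
    have hcost : w b * ∑ r ∈ π b, u b r < w a :=
      calc w b * ∑ r ∈ π b, u b r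
          < w b * N := Nat.mul_lt_mul_of_pos_left (hN b (π b)) (hw_pos b)
        _ = N * w b := mul_comm _ _
        _ ≤ w a := hw_arc a b hab
    rw [sum_eq_zero_of_isMax_weightedWelfare hπ hmax hne hcost]
    exact Nat.zero_le _
  · rintro ⟨π', hπ', hle, hlt⟩
    exact (hmax π' fun _ _ h => hπ' _ _ h).not_gt (weightedWelfare_lt_of_dominates hw_pos hle hlt)
end

section
/- Let G be an acyclic attention graph on a nonempty finite set A of agents, and assume all agents have 0/1 utility functions (u_a(r) ∈ {0,1} for all a, r). Then there exists a weakly G-envy-free allocation π whose utilitarian social welfare attains the maximum possible value over all allocations, namely W(π) = Σ_{r∈R} max_{a∈A} u_a(r). -/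
/-!
Number the agents compatibly with the attention graph, e.g. by the number of their strict
ancestors, so that every arc `a → b` has `rank a < rank b`. Give each resource to an agent of
least rank among those valuing it most. Welfare is then maximal by construction. If `a → b`
and `b` received `r` while `u a r = 1`, then `a` also values `r` maximally and has smaller rank,
contradicting the choice; so `a` values `b`'s bundle at `0` and cannot envy `b`.
-/

open Finset

namespace Relation

variable {A : Type*} [Fintype A] {E : A → A → Prop}

theorem exists_strictMono_rank_of_acyclic (hacyc : ∀ a, ¬ TransGen E a a) :
    ∃ rank : A → ℕ, ∀ a b, E a b → rank a < rank b := by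
  classical
  refine ⟨fun a => #{c | TransGen E c a}, fun a b hab => card_lt_card ?_⟩
  refine ssubset_iff_of_subset (fun c hc => ?_) |>.2 ⟨a, ?_, ?_⟩
  · simp only [mem_filter, mem_univ, true_and] at hc ⊢
    exact hc.tail hab
  · simpa using TransGen.single hab
  · simpa using hacyc a

end Relation

theorem Finset.sum_fiberwise_dependent {ι κ M : Type*} [Fintype ι] [Fintype κ] [DecidableEq κ]
    [AddCommMonoid M] (g : ι → κ) (f : κ → ι → M) :
    ∑ j, ∑ i with g i = j, f j i = ∑ i, f (g i) i := by
  calc ∑ j, ∑ i with g i = j, f j i = ∑ j, ∑ i with g i = j, f (g i) i :=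
        sum_congr rfl fun _ _ => sum_congr rfl fun _ hi => by rw [(mem_filter.1 hi).2]
    _ = ∑ i, f (g i) i := sum_fiberwise _ g _

theorem exists_maximizer_of_least_rank {A α β : Type*} [Fintype A] [Nonempty A] [LinearOrder α]
    [LinearOrder β] (f : A → α) (rank : A → β) :
    ∃ a, (∀ b, f b ≤ f a) ∧ ∀ b, f b = f a → rank a ≤ rank b := by
  classical
  obtain ⟨m, -, hm⟩ := exists_max_image univ f univ_nonempty
  obtain ⟨a, ha, hmin⟩ := exists_min_image {b | f b = f m} rank ⟨m, by simp⟩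
  rw [mem_filter] at ha
  exact ⟨a, fun b => ha.2 ▸ hm b (mem_univ b), fun b hb => hmin b (by simp [hb, ha.2])⟩

/-- Acyclic attention graph on a nonempty agent set, 0/1
utilities: there exists a weakly G-envy-free allocation whose utilitarian
social welfare attains the maximum possible value `Σ_{r∈R} max_a u a r`. -/
theorem stmt_16 {A R : Type*} [Fintype A] [Fintype R] [Nonempty A]
    (E : A → A → Prop)
    (hacyc : ∀ a, ¬ Relation.TransGen E a a)
    (u : A → R → ℕ) (h01 : ∀ a r, u a r = 0 ∨ u a r = 1) :
    ∃ π : A → Finset R, (∀ x y, x ≠ y → Disjoint (π x) (π y)) ∧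
      (∀ a b, E a b → ∑ r ∈ π b, u a r ≤ ∑ r ∈ π a, u a r) ∧
      (∑ a : A, ∑ r ∈ π a, u a r = ∑ r : R, Finset.univ.sup (fun a => u a r)) := by
  classical
  obtain ⟨rank, hrank⟩ := Relation.exists_strictMono_rank_of_acyclic hacyc
  choose g hg_max hg_min using fun r => exists_maximizer_of_least_rank (u · r) rank
  refine ⟨fun a => {r | g r = a}, fun x y hxy => disjoint_filter.2 fun r _ hx hy => hxy (hx ▸ hy),
    fun a b hab => ?_, ?_⟩
  · have hzero : ∀ r ∈ ({r | g r = b} : Finset R), u a r = 0 := by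
      intro r hr
      rw [mem_filter] at hr
      refine (h01 a r).resolve_right fun ha => ?_
      have ha_max : u a r = u (g r) r :=
        le_antisymm (hg_max r a) (ha ▸ (h01 (g r) r).elim (·.le.trans zero_le_one) le_of_eq)
      exact (hrank a b hab).not_ge (hr.2 ▸ hg_min r a ha_max)
    exact (sum_eq_zero hzero).trans_le (Nat.zero_le _)
  · rw [sum_fiberwise_dependent g u]
    exact sum_congr rfl fun r _ =>
      le_antisymm (le_sup (f := (u · r)) (mem_univ _)) (Finset.sup_le fun b _ => hg_max r b)
end

section
/- Assume the agents have identical utilities given by a single additive monotonic utility function u, let G be an acyclic attention graph on a nonempty finite set A of agents, and suppose there exists a set S ⊆ R of resources with |S| = |A| whose utility values are pairwise distinct (u is injective on S). Then a complete strongly G-envy-free allocation exists. -/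
/-!
Rank the agents by the number of agents reachable from them: acyclicity makes this rank drop
strictly along every arc. Match the agents bijectively with the `|A|` distinctly valued resources
of `S`, monotonically from rank to utility (ties in rank broken arbitrarily), so that along every
arc the envied agent holds a strictly less valuable resource. The remaining resources all go to
an agent whose resource is the most valuable one; nobody points at that agent, so the extra
items cannot create envy.
-/

open Finset

theorem exists_equiv_lt_of_lt {α β γ δ : Type*} [Fintype α] [Fintype β] [LinearOrder γ]
    [LinearOrder δ] (f : α → γ) (g : β → δ) (hg : Function.Injective g)
    (hcard : Fintype.card α = Fintype.card β) :
    ∃ e : α ≃ β, ∀ a a', f a < f a' → g (e a) < g (e a') := by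
  let _ : LinearOrder α :=
    LinearOrder.lift' (fun a => toLex (f a, Fintype.equivFin α a)) fun a a' h =>
      (Fintype.equivFin α).injective (Prod.ext_iff.mp (toLex.injective h)).2
  let _ : LinearOrder β := LinearOrder.lift' g hg
  let e : α ≃o β :=
    (Fintype.orderIsoFinOfCardEq α hcard).symm.trans (Fintype.orderIsoFinOfCardEq β rfl)
  exact ⟨e.toEquiv, fun a a' h => e.strictMono (Prod.Lex.toLex_lt_toLex.2 (.inl h))⟩

open Classical in
theorem card_transGen_lt_of_rel {A : Type*} [Fintype A] {E : A → A → Prop}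
    (hacyc : ∀ a, ¬ Relation.TransGen E a a) {a b : A} (hab : E a b) :
    #{c | Relation.TransGen E b c} < #{c | Relation.TransGen E a c} := by
  refine card_lt_card ⟨fun c hc => ?_, fun hsub => ?_⟩
  · simp only [mem_filter, mem_univ, true_and] at hc ⊢
    exact .head hab hc
  · have hb : b ∈ ({c | Relation.TransGen E a c} : Finset A) := by simpa using .single hab
    exact hacyc b (by simpa using hsub hb)

section GiveRestTo

variable {A R : Type*} [Fintype A] [DecidableEq A] [Fintype R] [DecidableEq R]

def giveRestTo (g : A ↪ R) (a₀ a : A) : Finset R :=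
  if a = a₀ then insert (g a) (univ.map g)ᶜ else {g a}

variable (g : A ↪ R) (a₀ : A)

theorem giveRestTo_of_ne {a : A} (h : a ≠ a₀) : giveRestTo g a₀ a = {g a} := if_neg h

theorem mem_giveRestTo_self (a : A) : g a ∈ giveRestTo g a₀ a := by
  unfold giveRestTo
  split_ifs <;> simp

theorem mem_giveRestTo_iff {r : R} {a : A} :
    r ∈ giveRestTo g a₀ a ↔ r = g a ∨ (a = a₀ ∧ ∀ b, g b ≠ r) := by
  unfold giveRestTo
  split_ifs with h <;> simp [h]

theorem giveRestTo_disjoint {a b : A} (hab : a ≠ b) :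
    Disjoint (giveRestTo g a₀ a) (giveRestTo g a₀ b) := by
  simp only [disjoint_left, mem_giveRestTo_iff]
  rintro r (rfl | ⟨ha₀, ha⟩) (h | ⟨hb₀, hb⟩)
  · exact hab (g.injective h)
  · exact hb a rfl
  · exact ha b h.symm
  · exact hab (ha₀.trans hb₀.symm)

theorem exists_mem_giveRestTo (r : R) : ∃ a, r ∈ giveRestTo g a₀ a := by
  by_cases h : ∃ b, g b = r
  · obtain ⟨b, rfl⟩ := h
    exact ⟨b, mem_giveRestTo_self g a₀ b⟩
  · exact ⟨a₀, (mem_giveRestTo_iff g a₀).2 (.inr ⟨rfl, not_exists.mp h⟩)⟩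

end GiveRestTo

/-- Identical utilities, acyclic attention graph on a nonempty
agent set, and a set `S ⊆ R` with `|S| = |A|` of pairwise distinctly valued
resources: a complete strongly G-envy-free allocation exists. -/
theorem stmt_17 {A R : Type*} [Fintype A] [Fintype R] [Nonempty A]
    (E : A → A → Prop)
    (hacyc : ∀ a, ¬ Relation.TransGen E a a)
    (u : R → ℕ)
    (S : Finset R) (hScard : S.card = Fintype.card A)
    (hinj : ∀ r ∈ S, ∀ r' ∈ S, u r = u r' → r = r') :
    ∃ π : A → Finset R, (∀ x y, x ≠ y → Disjoint (π x) (π y)) ∧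
      (∀ r : R, ∃ a, r ∈ π a) ∧
      (∀ a b, E a b → ∑ r ∈ π b, u r < ∑ r ∈ π a, u r) := by
  classical
  obtain ⟨e, he⟩ := exists_equiv_lt_of_lt (fun a => #{c | Relation.TransGen E a c})
    (fun r : S => u r) (fun r r' h => Subtype.ext (hinj r r.2 r' r'.2 h))
    (by rw [Fintype.card_coe, hScard])
  let g : A ↪ R := e.toEmbedding.trans (.subtype _)
  obtain ⟨a₀, ha₀⟩ := Finite.exists_max fun a => u (g a)
  have hlt : ∀ a b, E a b → u (g b) < u (g a) := fun a b hab =>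
    he b a (card_transGen_lt_of_rel hacyc hab)
  refine ⟨giveRestTo g a₀, fun _ _ => giveRestTo_disjoint g a₀,
    exists_mem_giveRestTo g a₀, fun a b hab => ?_⟩
  have hb : b ≠ a₀ := by
    rintro rfl
    exact (hlt a b hab).not_ge (ha₀ a)
  calc ∑ r ∈ giveRestTo g a₀ b, u r = u (g b) := by rw [giveRestTo_of_ne g a₀ hb, sum_singleton]
    _ < u (g a) := hlt a b hab
    _ ≤ ∑ r ∈ giveRestTo g a₀ a, u r :=
      single_le_sum (fun _ _ => Nat.zero_le _) (mem_giveRestTo_self g a₀ a)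
end
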